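/- Let X be a Polish space, R ⊆ C_b(X) a subring that approximates open sets, V a normed R-module and N a local vector measure on V. Then for every open A ⊆ X and every v ∈ V one has |N(A)(v)| ≤ |N|(A) · ‖v‖_{|A}, with the convention that the right-hand side equals 0 when |N|(A) = ∞ and ‖v‖_{|A} = 0. -/

import Mathlib

open BoundedContinuousFunction Filter Topology Set MeasureTheory ENNReal

noncomputable section

/-- A subring `R ⊆ C_b(X)` approximates open sets. -/
structure ApproximatesOpenSets {X : Type*} [TopologicalSpace X] (R : Subring (X →ᵇ ℝ)) : Prop where
  const_mem : ∀ c : ℝ, const X c ∈ R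
  sup_mem : ∀ f g : X →ᵇ ℝ, f ∈ R → g ∈ R → ∃ h ∈ R, ∀ x, h x = max (f x) (g x)
  inf_mem : ∀ f g : X →ᵇ ℝ, f ∈ R → g ∈ R → ∃ h ∈ R, ∀ x, h x = min (f x) (g x)
  const_mul_mem : ∀ (c : ℝ) (f : X →ᵇ ℝ), f ∈ R → const X c * f ∈ R
  approx : ∀ A : Set X, IsOpen A →
    ∃ f : ℕ → X →ᵇ ℝ, (∀ k, f k ∈ R) ∧ (∀ x, Monotone fun k => f k x) ∧
      ∀ x, Tendsto (fun k => f k x) atTop (𝓝 (A.indicator (fun _ => (1:ℝ)) x))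

/-- The action of constant functions in `R` agrees with the real scalar multiplication. -/
def ConstSMulCompat {X : Type*} [TopologicalSpace X] (R : Subring (X →ᵇ ℝ)) (V : Type*)
    [NormedAddCommGroup V] [NormedSpace ℝ V] [Module R V] : Prop :=
  ∀ (c : ℝ) (hc : const X c ∈ R) (v : V), (⟨const X c, hc⟩ : ↥R) • v = c • v

/-- The compatibility inequality defining a normed `R`-module. -/
def NormSMulCompat {X : Type*} [TopologicalSpace X] (R : Subring (X →ᵇ ℝ)) (V : Type*)
    [NormedAddCommGroup V] [Module R V] : Prop :=
  ∀ (s : Finset ℕ) (f : ℕ → ↥R) (v : ℕ → V) (M K : ℝ), 0 ≤ M → 0 ≤ K →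
    ((s : Set ℕ).Pairwise fun i j =>
      Disjoint (tsupport ⇑((f i : X →ᵇ ℝ))) (tsupport ⇑((f j : X →ᵇ ℝ)))) →
    (∀ i ∈ s, ‖(f i : X →ᵇ ℝ)‖ ≤ M) → (∀ i ∈ s, ‖v i‖ ≤ K) →
    ‖∑ i ∈ s, f i • v i‖ ≤ M * K

/-- The local seminorm `‖v‖_{|A}`. -/
def locNorm {X : Type*} [TopologicalSpace X] (R : Subring (X →ᵇ ℝ)) {V : Type*}
    [NormedAddCommGroup V] [Module R V] (A : Set X) (v : V) : ℝ :=
  sSup {r : ℝ | ∃ f : ↥R, tsupport ⇑((f : X →ᵇ ℝ)) ⊆ A ∧ ‖(f : X →ᵇ ℝ)‖ ≤ 1 ∧ r = ‖f • v‖}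

/-- The germ seminorm `|v|_g(x)`. -/
def germNorm {X : Type*} [TopologicalSpace X] (R : Subring (X →ᵇ ℝ)) {V : Type*}
    [NormedAddCommGroup V] [Module R V] (v : V) (x : X) : ℝ :=
  sInf {r : ℝ | ∃ A : Set X, IsOpen A ∧ x ∈ A ∧ r = locNorm R A v}

/-- `supp v ⊆ B`: there is a closed set `C ⊆ B` with `‖v‖_{|X∖C} = 0`. -/
def suppIn {X : Type*} [TopologicalSpace X] (R : Subring (X →ᵇ ℝ)) {V : Type*}
    [NormedAddCommGroup V] [Module R V] (v : V) (B : Set X) : Prop :=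
  ∃ C : Set X, IsClosed C ∧ C ⊆ B ∧ locNorm R Cᶜ v = 0

/-- σ-additivity, with convergence of the partial sums in norm. -/
def SigmaAdditive {X : Type*} [MeasurableSpace X] {E : Type*} [NormedAddCommGroup E]
    (N : Set X → E) : Prop :=
  ∀ A : ℕ → Set X, (∀ n, MeasurableSet (A n)) → Pairwise (Function.onFun Disjoint A) →
    Tendsto (fun n => ∑ k ∈ Finset.range n, N (A k)) atTop (𝓝 (N (⋃ k, A k)))

/-- A local vector measure on the normed `R`-module `V`. -/
structure IsLocalVectorMeasure {X : Type*} [TopologicalSpace X] [MeasurableSpace X]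
    (R : Subring (X →ᵇ ℝ)) {V : Type*} [NormedAddCommGroup V] [NormedSpace ℝ V] [Module R V]
    (N : Set X → V →L[ℝ] ℝ) : Prop where
  sigma_additive : SigmaAdditive N
  weakly_local : ∀ A : Set X, IsOpen A → ∀ v : V, locNorm R A v = 0 → N A v = 0

/-- The total variation `|N|(B)`, as the supremum of `Σ ‖N(A_i)‖` over finite Borel
partitions of `B`. -/
def totalVar {X : Type*} [MeasurableSpace X] {E : Type*} [NormedAddCommGroup E]
    (N : Set X → E) (B : Set X) : ℝ≥0∞ :=
  ⨆ (n : ℕ) (A : Fin n → Set X)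
    (_ : (∀ i, MeasurableSet (A i)) ∧ Pairwise (Function.onFun Disjoint A) ∧ (⋃ i, A i) = B),
      ∑ i, (‖N (A i)‖₊ : ℝ≥0∞)

/-- Tightness of a functional `F ∈ V'` with respect to `R`. -/
def IsTight {X : Type*} [TopologicalSpace X] (R : Subring (X →ᵇ ℝ)) {V : Type*}
    [NormedAddCommGroup V] [NormedSpace ℝ V] [Module R V] (F : V →L[ℝ] ℝ) : Prop :=
  ∀ (v : V) (f : ℕ → ↥R),
    (∀ x, Antitone fun n => ((f n : X →ᵇ ℝ)) x) →
    (∀ x, Tendsto (fun n => ((f n : X →ᵇ ℝ)) x) atTop (𝓝 (0:ℝ))) →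
    Tendsto (fun n => F ((f n) • v)) atTop (𝓝 (0:ℝ))


/-! Approximating `χ_A` from below by `g_k ∈ R` and clamping `4 g_k - 2` to `[0, 1]` gives
cutoffs `F_k ∈ R` with `‖F_k‖ ≤ 1`, `supp F_k ⊆ {g_k ≥ 1/2} ⊆ A`, and `F_k = 1` on the open sets
`O_k = {g_k > 3/4}`, which cover `A`. On the Borel pieces `P_k = O_k \ ⋃_{j<k} O_j`, weak locality
applied to the open sets `O_k` and `O_k ∩ ⋃_{j<k} O_j` gives `N(P_k) v = N(P_k) (F_k v)`, hence
`|N(P_k) v| ≤ ‖N(P_k)‖ · ‖v‖_{|A}`. Summing by σ-additivity and bounding `Σ_k ‖N(P_k)‖` by `|N|(A)`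
concludes. -/

open scoped NNReal

section LocNorm

variable {X : Type*} [TopologicalSpace X] {R : Subring (X →ᵇ ℝ)} {V : Type*}
  [NormedAddCommGroup V] [Module R V]

lemma NormSMulCompat.norm_smul_le (hnorm : NormSMulCompat R V) {f : R}
    (hf : ‖(f : X →ᵇ ℝ)‖ ≤ 1) (v : V) : ‖f • v‖ ≤ ‖v‖ := by
  simpa using hnorm {0} (fun _ => f) (fun _ => v) 1 ‖v‖ zero_le_one (norm_nonneg v) (by simp)
    (fun _ _ => hf) (fun _ _ => le_rfl)

lemma norm_smul_le_locNorm (hnorm : NormSMulCompat R V) {A : Set X} {f : R}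
    (hfA : tsupport (f : X →ᵇ ℝ) ⊆ A) (hf : ‖(f : X →ᵇ ℝ)‖ ≤ 1) (v : V) :
    ‖f • v‖ ≤ locNorm R A v :=
  le_csSup ⟨‖v‖, by rintro _ ⟨g, -, hg, rfl⟩; exact hnorm.norm_smul_le hg v⟩ ⟨f, hfA, hf, rfl⟩

lemma locNorm_eq_zero_of_smul_eq_zero {A : Set X} {v : V}
    (h : ∀ f : R, tsupport (f : X →ᵇ ℝ) ⊆ A → f • v = 0) : locNorm R A v = 0 := by
  refine le_antisymm (Real.sSup_le ?_ le_rfl) (Real.sSup_nonneg ?_)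
  · rintro _ ⟨f, hfA, -, rfl⟩
    simp [h f hfA]
  · rintro _ ⟨f, -, -, rfl⟩
    exact norm_nonneg _

lemma locNorm_sub_smul_eq_zero {A : Set X} {f : R} (hf : EqOn (f : X →ᵇ ℝ) 1 A) (v : V) :
    locNorm R A (v - f • v) = 0 := by
  refine locNorm_eq_zero_of_smul_eq_zero fun g hg => ?_
  have hgf : g * f = g := Subtype.ext <| BoundedContinuousFunction.ext fun x => by
    by_cases hx : x ∈ A
    · simp [hf hx]
    · simp [image_eq_zero_of_notMem_tsupport (mt (@hg x) hx)]
  rw [smul_sub, ← mul_smul, hgf, sub_self]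

end LocNorm

section SetFunction

variable {X : Type*} [MeasurableSpace X] {E : Type*} [NormedAddCommGroup E] {N : Set X → E}

lemma SigmaAdditive.empty (h : SigmaAdditive N) : N ∅ = 0 := by
  have hlim := h (fun _ => ∅) (fun _ => .empty) (fun _ _ _ => by simp [Function.onFun])
  simp only [Finset.sum_const, Finset.card_range, iUnion_empty] at hlim
  have hstep := ((tendsto_add_atTop_iff_nat 1).2 hlim).sub hlim
  simp only [add_smul, one_smul, add_sub_cancel_left, sub_self] at hstep
  exact tendsto_nhds_unique tendsto_const_nhds hstep

lemma SigmaAdditive.union (h : SigmaAdditive N) {B C : Set X} (hB : MeasurableSet B)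
    (hC : MeasurableSet C) (hBC : Disjoint B C) : N (B ∪ C) = N B + N C := by
  let s : ℕ → Set X := fun n => if n = 0 then B else if n = 1 then C else ∅
  have hs : ∀ n, MeasurableSet (s n) := by
    intro n
    rcases n with _ | _ | n <;> simp [s, hB, hC]
  have hsd : Pairwise (Function.onFun Disjoint s) := by
    intro i j hij
    rcases i with _ | _ | i <;> rcases j with _ | _ | j <;> simp_all [s, Function.onFun, hBC.symm]
  have hsU : ⋃ n, s n = B ∪ C := by
    refine subset_antisymm (iUnion_subset fun n => ?_)
      (union_subset (subset_iUnion s 0) (subset_iUnion s 1))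
    rcases n with _ | _ | n <;> simp [s]
  have hsum : ∀ n, ∑ k ∈ Finset.range (n + 2), N (s k) = N B + N C := by
    intro n
    simp [Finset.sum_range_succ', s, h.empty, add_comm]
  have hlim := h s hs hsd
  rw [hsU, ← tendsto_add_atTop_iff_nat 2] at hlim
  simp only [hsum] at hlim
  exact tendsto_nhds_unique hlim tendsto_const_nhds

lemma sum_le_totalVar {ι : Type*} [Fintype ι] {B : Set X} {P : ι → Set X}
    (hP : ∀ i, MeasurableSet (P i)) (hPd : Pairwise (Function.onFun Disjoint P))
    (hPB : ⋃ i, P i = B) : ∑ i, (‖N (P i)‖₊ : ℝ≥0∞) ≤ totalVar N B := by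
  let e := (Fintype.equivFin ι).symm
  rw [← e.sum_comp]
  exact le_iSup_of_le _ <| le_iSup_of_le (P ∘ e) <| le_iSup_of_le
    ⟨fun i => hP (e i), hPd.comp_of_injective e.injective, e.surjective.iUnion_comp P ▸ hPB⟩ le_rfl

lemma tsum_le_totalVar {B : Set X} (hB : MeasurableSet B) {P : ℕ → Set X}
    (hP : ∀ k, MeasurableSet (P k)) (hPd : Pairwise (Function.onFun Disjoint P))
    (hPB : ∀ k, P k ⊆ B) : ∑' k, (‖N (P k)‖₊ : ℝ≥0∞) ≤ totalVar N B := by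
  refine ENNReal.tsum_le_of_sum_range_le fun n => ?_
  let Q : Option (Fin n) → Set X := fun o => o.elim (B \ ⋃ i : Fin n, P i) fun i => P i
  have hQ : ∀ o, MeasurableSet (Q o) := by
    rintro (_ | i)
    exacts [hB.diff (.iUnion fun i => hP i), hP i]
  have hQd : Pairwise (Function.onFun Disjoint Q) := by
    rintro (_ | i) (_ | j) hij
    · exact absurd rfl hij
    · exact disjoint_sdiff_left.mono_right (subset_iUnion (fun i : Fin n => P i) j)
    · exact disjoint_sdiff_right.mono_left (subset_iUnion (fun i : Fin n => P i) i)
    · exact hPd fun h => hij (congrArg some (Fin.ext h))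
  have hQB : ⋃ o, Q o = B := by
    rw [iUnion_option]
    exact sdiff_union_of_subset (iUnion_subset fun i => hPB i)
  calc ∑ k ∈ Finset.range n, (‖N (P k)‖₊ : ℝ≥0∞) = ∑ i : Fin n, (‖N (Q (some i))‖₊ : ℝ≥0∞) :=
        (Fin.sum_univ_eq_sum_range (fun k => (‖N (P k)‖₊ : ℝ≥0∞)) n).symm
    _ ≤ ∑ o, (‖N (Q o)‖₊ : ℝ≥0∞) := by rw [Fintype.sum_option]; exact le_add_self
    _ ≤ totalVar N B := sum_le_totalVar hQ hQd hQB

end SetFunction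

lemma ofReal_abs_le_tsum_mul_of_tendsto {a : ℕ → ℝ} {s : ℝ}
    (hs : Tendsto (fun n => ∑ k ∈ Finset.range n, a k) atTop (𝓝 s)) {b : ℕ → ℝ≥0} {c : ℝ}
    (hab : ∀ k, |a k| ≤ b k * c) :
    ENNReal.ofReal |s| ≤ (∑' k, (b k : ℝ≥0∞)) * ENNReal.ofReal c := by
  refine le_of_tendsto' ((ENNReal.continuous_ofReal.comp continuous_abs).tendsto s |>.comp hs)
    fun n => ?_
  calc ENNReal.ofReal |∑ k ∈ Finset.range n, a k|
      ≤ ENNReal.ofReal ((∑ k ∈ Finset.range n, (b k : ℝ)) * c) := by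
        rw [Finset.sum_mul]
        exact ENNReal.ofReal_le_ofReal
          ((Finset.abs_sum_le_sum_abs _ _).trans (Finset.sum_le_sum fun k _ => hab k))
    _ = (∑ k ∈ Finset.range n, (b k : ℝ≥0∞)) * ENNReal.ofReal c := by
        rw [ENNReal.ofReal_mul (by positivity), ← NNReal.coe_sum, ENNReal.ofReal_coe_nnreal,
          ENNReal.ofNNReal_finsetSum]
    _ ≤ (∑' k, (b k : ℝ≥0∞)) * ENNReal.ofReal c := by gcongr; exact ENNReal.sum_le_tsum _

section Cutoff

variable {X : Type*} [TopologicalSpace X] {R : Subring (X →ᵇ ℝ)}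

lemma ApproximatesOpenSets.exists_clamp (hR : ApproximatesOpenSets R) {h : X →ᵇ ℝ}
    (hh : h ∈ R) : ∃ f ∈ R, ∀ x, f x = max 0 (min 1 (h x)) := by
  obtain ⟨g, hgR, hg⟩ := hR.inf_mem _ _ (hR.const_mem 1) hh
  obtain ⟨f, hfR, hf⟩ := hR.sup_mem _ _ (hR.const_mem 0) hgR
  exact ⟨f, hfR, fun x => by simp [hf, hg]⟩

lemma ApproximatesOpenSets.exists_cutoffs (hR : ApproximatesOpenSets R) {A : Set X}
    (hA : IsOpen A) :
    ∃ (F : ℕ → R) (O : ℕ → Set X), (∀ k, ‖(F k : X →ᵇ ℝ)‖ ≤ 1) ∧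
      (∀ k, tsupport (F k : X →ᵇ ℝ) ⊆ A) ∧ (∀ k, EqOn (F k : X →ᵇ ℝ) 1 (O k)) ∧
      (∀ k, IsOpen (O k)) ∧ ⋃ k, O k = A := by
  obtain ⟨g, hgR, hgmono, hglim⟩ := hR.approx A hA
  have hgA : ∀ k x, 0 < g k x → x ∈ A := by
    intro k x hx
    by_contra hxA
    have := (hgmono x).ge_of_tendsto (hglim x) k
    rw [indicator_of_notMem hxA] at this
    linarith
  choose F hFR hF using fun k => hR.exists_clamp
    (sub_mem (mul_mem (hR.const_mem 4) (hgR k)) (hR.const_mem 2))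
  replace hF : ∀ k x, F k x = max 0 (min 1 (4 * g k x - 2)) := by simp [hF]
  refine ⟨fun k => ⟨F k, hFR k⟩, fun k => {x | 3/4 < g k x}, fun k => ?_, fun k => ?_,
    fun k x hx => ?_, fun k => isOpen_lt continuous_const (g k).continuous, ?_⟩
  · refine (BoundedContinuousFunction.norm_le zero_le_one).2 fun x => ?_
    rw [hF, Real.norm_eq_abs, abs_le]
    constructor <;> simp
  · have hsupp : Function.support (F k) ⊆ {x | 1/2 ≤ g k x} := by
      intro x hx
      by_contra hlt
      simp only [mem_ofPred_eq, not_le] at hlt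
      exact hx (by rw [hF]; exact max_eq_left (min_le_of_right_le (by linarith)))
    refine (closure_minimal hsupp (isClosed_le continuous_const (g k).continuous)).trans
      fun x hx => hgA k x (by simp only [mem_ofPred_eq] at hx; linarith)
  · simp only [mem_ofPred_eq] at hx
    rw [hF, min_eq_left (by linarith), max_eq_right zero_le_one]
    rfl
  · refine subset_antisymm (iUnion_subset fun k x hx => hgA k x ?_) fun x hx => ?_
    · simp only [mem_ofPred_eq] at hx
      linarith
    · have hlim : Tendsto (fun k => g k x) atTop (𝓝 1) := by
        simpa [indicator_of_mem hx] using hglim x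
      obtain ⟨k, hk⟩ :=
        (hlim.eventually (eventually_gt_nhds (by norm_num : (3/4 : ℝ) < 1))).exists
      exact mem_iUnion.2 ⟨k, hk⟩

end Cutoff

section LocalVectorMeasure

variable {X : Type*} [TopologicalSpace X] [MeasurableSpace X] [OpensMeasurableSpace X]
  {R : Subring (X →ᵇ ℝ)} {V : Type*} [NormedAddCommGroup V] [NormedSpace ℝ V] [Module R V]
  {N : Set X → V →L[ℝ] ℝ}

lemma IsLocalVectorMeasure.apply_diff_sub_smul_eq_zero (hN : IsLocalVectorMeasure R N)
    {O C : Set X} (hO : IsOpen O) (hC : IsOpen C) {f : R} (hf : EqOn (f : X →ᵇ ℝ) 1 O) (v : V) :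
    N (O \ C) (v - f • v) = 0 := by
  have hsplit := hN.sigma_additive.union (hO.inter hC).measurableSet
    (hO.measurableSet.diff hC.measurableSet) disjoint_sdiff_inter.symm
  have hO0 := hN.weakly_local O hO _ (locNorm_sub_smul_eq_zero hf v)
  rw [← inter_union_sdiff O C, hsplit, _root_.add_apply,
    hN.weakly_local _ (hO.inter hC) _ (locNorm_sub_smul_eq_zero (hf.mono inter_subset_left) v),
    zero_add] at hO0
  exact hO0

lemma IsLocalVectorMeasure.abs_apply_diff_le (hN : IsLocalVectorMeasure R N)
    (hnorm : NormSMulCompat R V) {A O C : Set X} (hO : IsOpen O) (hC : IsOpen C) {f : R}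
    (hf : ‖(f : X →ᵇ ℝ)‖ ≤ 1) (hfA : tsupport (f : X →ᵇ ℝ) ⊆ A) (hfO : EqOn (f : X →ᵇ ℝ) 1 O)
    (v : V) : |N (O \ C) v| ≤ ‖N (O \ C)‖ * locNorm R A v := by
  have hloc : N (O \ C) v = N (O \ C) (f • v) := by
    rw [← sub_eq_zero, ← map_sub]
    exact hN.apply_diff_sub_smul_eq_zero hO hC hfO v
  rw [hloc, ← Real.norm_eq_abs]
  exact ((N _).le_opNorm _).trans
    (mul_le_mul_of_nonneg_left (norm_smul_le_locNorm hnorm hfA hf v) (norm_nonneg _))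

end LocalVectorMeasure

theorem statement4_general {X : Type*} [MetricSpace X] [MeasurableSpace X] [BorelSpace X]
    {V : Type*} [NormedAddCommGroup V] [NormedSpace ℝ V]
    (R : Subring (X →ᵇ ℝ)) [Module R V]
    (hR : ApproximatesOpenSets R) (hnorm : NormSMulCompat R V)
    (N : Set X → V →L[ℝ] ℝ) (hN : IsLocalVectorMeasure R N)
    (A : Set X) (hA : IsOpen A) (v : V) :
    ENNReal.ofReal |N A v| ≤ totalVar N A * ENNReal.ofReal (locNorm R A v) := by
  obtain ⟨F, O, hF1, hFA, hFO, hO, hOA⟩ := hR.exists_cutoffs hA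
  have hP : ∀ k, MeasurableSet (disjointed O k) :=
    .disjointed fun k => (hO k).measurableSet
  have hlim :
      Tendsto (fun n => ∑ k ∈ Finset.range n, N (disjointed O k) v) atTop (𝓝 (N A v)) := by
    have := hN.sigma_additive _ hP (disjoint_disjointed O)
    rw [iUnion_disjointed, hOA] at this
    simpa only [Function.comp_def, ContinuousLinearMap.apply_apply,
      _root_.sum_apply] using ((ContinuousLinearMap.apply ℝ ℝ v).continuous.tendsto _).comp this
  have hbound : ∀ k, |N (disjointed O k) v| ≤ ‖N (disjointed O k)‖₊ * locNorm R A v := by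
    intro k
    have hC : IsOpen ((Finset.Iio k).sup O) :=
      Finset.sup_induction isOpen_empty (fun _ h₁ _ h₂ => h₁.union h₂) fun j _ => hO j
    rw [disjointed_apply]
    exact hN.abs_apply_diff_le hnorm (hO k) hC (hF1 k) (hFA k) (hFO k) v
  calc ENNReal.ofReal |N A v|
      ≤ (∑' k, (‖N (disjointed O k)‖₊ : ℝ≥0∞)) * ENNReal.ofReal (locNorm R A v) :=
        ofReal_abs_le_tsum_mul_of_tendsto hlim hbound
    _ ≤ totalVar N A * ENNReal.ofReal (locNorm R A v) := by
        gcongr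
        exact tsum_le_totalVar hA.measurableSet hP (disjoint_disjointed O)
          fun k => (disjointed_subset O k).trans (hOA ▸ subset_iUnion O k)

/-- for a local vector measure `N` on `V`, every open `A` and every `v`,
`|N(A)(v)| ≤ |N|(A) · ‖v‖_{|A}` (with the convention `∞ · 0 = 0`). -/
theorem statement4 {X : Type*} [MetricSpace X] [CompleteSpace X]
    [TopologicalSpace.SeparableSpace X] [MeasurableSpace X] [BorelSpace X]
    {V : Type*} [NormedAddCommGroup V] [NormedSpace ℝ V]
    (R : Subring (X →ᵇ ℝ)) [Module R V]
    (hR : ApproximatesOpenSets R) (hconst : ConstSMulCompat R V) (hnorm : NormSMulCompat R V)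
    (N : Set X → V →L[ℝ] ℝ) (hN : IsLocalVectorMeasure R N)
    (A : Set X) (hA : IsOpen A) (v : V) :
    ENNReal.ofReal |N A v| ≤ totalVar N A * ENNReal.ofReal (locNorm R A v) :=
  statement4_general R hR hnorm N hN A hA v
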